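/- arXiv:1707.05491 — 3 statements merged into one kernel-verified Lean document; each statement's English description precedes it below -/
import Mathlib

section
/- A finite simple graph G is chordal if and only if every two minimal separators of G are noncrossing, i.e., for every pair of minimal separators S₁, S₂, the set S₂ is contained in the closed neighborhood of a single connected component of G − S₁ or lies entirely within one connected component of G − S₁ together with S₁ (equivalently: S₂ does not intersect two distinct connected components of G − S₁). -/
open SimpleGraph

variable {V : Type*}

/-- `D` is (the vertex set of) a connected component of `G - S`. -/
def IsCompOf (G : SimpleGraph V) (S D : Set V) : Prop :=
  D.Nonempty ∧ Disjoint D S ∧ (G.induce D).Connected ∧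
    ∀ v ∈ D, ∀ w : V, G.Adj v w → w ∉ S → w ∈ D

/-- The open neighborhood `N(D)` of a vertex set `D`. -/
def nbhd (G : SimpleGraph V) (D : Set V) : Set V :=
  {v | v ∉ D ∧ ∃ d ∈ D, G.Adj v d}

/-- The closed neighborhood `N[D]` of a vertex set `D`. -/
def closedNbhd (G : SimpleGraph V) (D : Set V) : Set V :=
  D ∪ nbhd G D

/-- `D` is full to `S`: every vertex of `S` has a neighbor in `D`. -/
def FullTo (G : SimpleGraph V) (S D : Set V) : Prop :=
  ∀ s ∈ S, ∃ d ∈ D, G.Adj s d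

/-- `S` is a minimal separator: `G - S` has at least two components full to `S`. -/
def IsMinSep (G : SimpleGraph V) (S : Set V) : Prop :=
  ∃ D₁ D₂ : Set V, IsCompOf G S D₁ ∧ IsCompOf G S D₂ ∧ D₁ ≠ D₂ ∧
    FullTo G S D₁ ∧ FullTo G S D₂

/-- A graph is chordal if it has no induced cycle of length at least 4. -/
def IsChordal (G : SimpleGraph V) : Prop :=
  ∀ n : ℕ, 4 ≤ n → IsEmpty (cycleGraph n ↪g G)

/-- `S₁` crosses `S₂`: `S₂` intersects at least two connected components of `G - S₁`. -/
def Crosses (G : SimpleGraph V) (S₁ S₂ : Set V) : Prop :=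
  ∃ D D' : Set V, IsCompOf G S₁ D ∧ IsCompOf G S₁ D' ∧ D ≠ D' ∧
    (S₂ ∩ D).Nonempty ∧ (S₂ ∩ D').Nonempty

/-
Dirac: in a chordal graph every minimal separator `S` is a clique. If `x, y ∈ S` were
non-adjacent, shortest `x`–`y` paths through two full components of `G - S` would be chordless,
and together they would form an induced cycle of length at least four. A clique cannot meet two
components of `G - S₁`, since no edges join them.

Conversely, if `x, y` are non-adjacent vertices of a minimal separator `S`, an inclusion-minimal
set `S₁` separating `x` from `y` is a minimal separator: the components of `x` and `y` in `G - S₁`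
are full to `S₁`. Since `x` and `y` lie in two different components of `G - S₁`, `S₁` crosses `S`.
So noncrossing forces every minimal separator to be a clique, and that forces chordality: on an
induced cycle `0, 1, 2, …` of length at least four, a minimal separator of `0` and `2` contains
`1` and also a vertex of the other arc, which is not adjacent to `1`.
-/

theorem cycleGraph_adj_iff_val {n : ℕ} (hn : 2 ≤ n) {i j : Fin n} :
    (cycleGraph n).Adj i j ↔ i.val = j.val + 1 ∨ j.val = i.val + 1 ∨
      (i.val = 0 ∧ j.val + 1 = n) ∨ (j.val = 0 ∧ i.val + 1 = n) := by
  rw [cycleGraph_adj']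
  rcases lt_trichotomy i j with h | rfl | h
  · rw [Fin.coe_sub_iff_lt.2 h, Fin.coe_sub_iff_le.2 h.le]
    have : i.val < j.val := h
    omega
  · rw [Fin.sub_def]; simp only [Nat.sub_add_cancel i.2.le, Nat.mod_self]
    omega
  · rw [Fin.coe_sub_iff_lt.2 h, Fin.coe_sub_iff_le.2 h.le]
    have : j.val < i.val := h
    omega

namespace SimpleGraph.Walk

variable {W : Type*} {G : SimpleGraph V} {u v : V}

theorem isChordless_of_length_eq_dist (p : G.Walk u v) (hp : p.length = G.dist u v) :
    p.IsChordless := by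
  rw [isChordless_iff_forall_mem_edges]
  suffices key : ∀ i j, i < j → j ≤ p.length → G.Adj (p.getVert i) (p.getVert j) →
      s(p.getVert i, p.getVert j) ∈ p.edges by
    intro a b ha hb hab
    obtain ⟨i, rfl, hi⟩ := mem_support_iff_exists_getVert.1 ha
    obtain ⟨j, rfl, hj⟩ := mem_support_iff_exists_getVert.1 hb
    rcases lt_trichotomy i j with hij | rfl | hij
    · exact key i j hij hj hab
    · exact absurd hab G.irrefl
    · exact Sym2.eq_swap ▸ key j i hij hi hab.symm
  intro i j hij hj hadj
  have hshort := dist_le ((p.take i).append (cons hadj (p.drop j)))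
  simp only [length_append, length_cons, take_length, drop_length] at hshort
  obtain rfl : j = i + 1 := by omega
  exact (mk_mem_edges_iff_exists p).2 ⟨i, by omega, rfl⟩

theorem IsChordless.map {H : SimpleGraph W} (f : G ↪g H) {p : G.Walk u v} (hp : p.IsChordless) :
    (p.map f.toHom).IsChordless := by
  rw [isChordless_iff_forall_mem_edges] at hp ⊢
  simp only [support_map, edges_map, List.mem_map]
  rintro _ _ ⟨a, ha, rfl⟩ ⟨b, hb, rfl⟩ hab
  exact ⟨s(a, b), hp ha hb (f.map_adj_iff.1 hab), rfl⟩

theorem IsChordless.reverse {p : G.Walk u v} (hp : p.IsChordless) : p.reverse.IsChordless := by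
  rw [isChordless_iff_forall_mem_edges] at hp ⊢
  simpa only [support_reverse, edges_reverse, List.mem_reverse] using hp

theorem IsChordless.append {w : V} {p : G.Walk u v} {q : G.Walk v w} (hp : p.IsChordless)
    (hq : q.IsChordless)
    (hpq : ∀ a ∈ p.support, ∀ b ∈ q.support, G.Adj a b → a ∈ q.support ∨ b ∈ p.support) :
    (p.append q).IsChordless := by
  rw [isChordless_iff_forall_mem_edges] at hp hq ⊢
  have key : ∀ a ∈ p.support, ∀ b ∈ q.support, G.Adj a b → s(a, b) ∈ (p.append q).edges := by
    intro a ha b hb hab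
    rw [edges_append, List.mem_append]
    rcases hpq a ha b hb hab with ha' | hb'
    · exact .inr (hq ha' hb hab)
    · exact .inl (hp ha hb' hab)
  intro a b ha hb hab
  rw [mem_support_append_iff] at ha hb
  rcases ha with ha | ha <;> rcases hb with hb | hb
  · exact edges_append p q ▸ List.mem_append_left _ (hp ha hb hab)
  · exact key a ha b hb hab
  · exact Sym2.eq_swap ▸ key b hb a ha hab.symm
  · exact edges_append p q ▸ List.mem_append_right _ (hq ha hb hab)

theorem IsCycle.adj_getVert_iff {c : G.Walk u u} (hc : c.IsCycle) (hch : c.IsChordless)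
    {i j : ℕ} (hi : i < c.length) (hj : j < c.length) :
    G.Adj (c.getVert i) (c.getVert j) ↔ i = j + 1 ∨ j = i + 1 ∨
      (i = 0 ∧ j + 1 = c.length) ∨ (j = 0 ∧ i + 1 = c.length) := by
  have hinj : ∀ k l, k < c.length → l < c.length → c.getVert k = c.getVert l → k = l :=
    fun k l hk hl h => hc.getVert_injOn' (by simp only [Set.mem_ofPred_eq]; omega)
      (by simp only [Set.mem_ofPred_eq]; omega) h
  have hwrap : c.getVert c.length = c.getVert 0 := by simp
  have hsucc : ∀ k < c.length, ∀ l < c.length, c.getVert (k + 1) = c.getVert l →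
      l = k + 1 ∨ (k + 1 = c.length ∧ l = 0) := by
    intro k hk l hl h
    by_cases hk' : k + 1 = c.length
    · rw [hk', hwrap] at h
      exact .inr ⟨hk', hinj l 0 hl (by omega) h.symm⟩
    · exact .inl (hinj l (k + 1) hl (by omega) h.symm)
  constructor
  · intro hadj
    obtain ⟨k, hk, he⟩ := (mk_mem_edges_iff_exists c).1 (hch.mem_edges (getVert_mem_support _ _)
      (getVert_mem_support _ _) hadj)
    rcases Sym2.eq_iff.1 he with ⟨h₁, h₂⟩ | ⟨h₁, h₂⟩
    · have := hinj k i hk hi h₁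
      have := hsucc k hk j hj h₂
      omega
    · have := hinj k j hk hj h₁
      have := hsucc k hk i hi h₂
      omega
  · rintro (rfl | rfl | ⟨rfl, h⟩ | ⟨rfl, h⟩)
    · exact (c.adj_getVert_succ hj).symm
    · exact c.adj_getVert_succ hi
    · simpa [h] using (c.adj_getVert_succ hj).symm
    · simpa [h] using c.adj_getVert_succ hi

theorem IsCycle.nonempty_embedding_cycleGraph {c : G.Walk u u} (hc : c.IsCycle)
    (hch : c.IsChordless) : Nonempty (cycleGraph c.length ↪g G) :=
  ⟨⟨⟨fun i => c.getVert i, fun i j h => Fin.ext (hc.getVert_injOn'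
      (by simp only [Set.mem_ofPred_eq]; omega) (by simp only [Set.mem_ofPred_eq]; omega) h)⟩,
    fun {i j} => (hc.adj_getVert_iff hch i.2 j.2).trans
      (cycleGraph_adj_iff_val (by have := hc.three_le_length; omega)).symm⟩⟩

end SimpleGraph.Walk

def ReachableOff (G : SimpleGraph V) (S : Set V) (u v : V) : Prop :=
  ∃ p : G.Walk u v, ∀ x ∈ p.support, x ∉ S

/-- `compOf G S v` is the vertex set of the component of `G - S` containing `v`; it is empty
when `v ∈ S`. -/
def compOf (G : SimpleGraph V) (S : Set V) (v : V) : Set V := {w | ReachableOff G S v w}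

variable {G : SimpleGraph V} {S D D' : Set V} {u v w : V}

namespace ReachableOff

theorem refl (hu : u ∉ S) : ReachableOff G S u u := ⟨.nil, by simpa using hu⟩

theorem symm (h : ReachableOff G S u v) : ReachableOff G S v u := by
  obtain ⟨p, hp⟩ := h
  exact ⟨p.reverse, by simpa using hp⟩

theorem trans (h : ReachableOff G S u v) (h' : ReachableOff G S v w) : ReachableOff G S u w := by
  obtain ⟨p, hp⟩ := h
  obtain ⟨q, hq⟩ := h'
  refine ⟨p.append q, fun x hx => ?_⟩
  rcases (Walk.mem_support_append_iff _ _).1 hx with hx | hx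
  exacts [hp x hx, hq x hx]

theorem of_adj (h : G.Adj u v) (hu : u ∉ S) (hv : v ∉ S) : ReachableOff G S u v :=
  ⟨h.toWalk, by simp [hu, hv]⟩

theorem notMem_right (h : ReachableOff G S u v) : v ∉ S := by
  obtain ⟨p, hp⟩ := h
  exact hp v p.end_mem_support

theorem of_mem_support {p : G.Walk u v} (hp : ∀ x ∈ p.support, x ∉ S) (hw : w ∈ p.support) :
    ReachableOff G S u w := by
  classical
  exact ⟨p.takeUntil w hw, fun x hx => hp x (p.support_takeUntil_subset_support hw hx)⟩

theorem mem_of_closed (hD : ∀ v ∈ D, ∀ w, G.Adj v w → w ∉ S → w ∈ D) (hu : u ∈ D)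
    (h : ReachableOff G S u v) : v ∈ D := by
  obtain ⟨p, hp⟩ := h
  induction p with
  | nil => exact hu
  | cons hadj q ih =>
    exact ih (hD _ hu _ hadj (hp _ (by simp))) fun x hx => hp x (by simp [hx])

theorem of_induce (hDS : Disjoint D S) {x y : D} (h : (G.induce D).Reachable x y) :
    ReachableOff G S x y := by
  obtain ⟨p⟩ := h
  refine ⟨p.map (Embedding.induce D).toHom, fun z hz hzS => ?_⟩
  obtain ⟨z, -, rfl⟩ := List.mem_map.1 (Walk.support_map (Embedding.induce D).toHom p ▸ hz)
  exact Set.disjoint_left.1 hDS z.2 hzS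

end ReachableOff

theorem isCompOf_compOf (hv : v ∉ S) : IsCompOf G S (compOf G S v) := by
  refine ⟨⟨v, .refl hv⟩, Set.disjoint_left.2 fun _ hx => hx.notMem_right, ?_,
    fun x hx y hxy hy => ReachableOff.trans hx (.of_adj hxy hx.notMem_right hy)⟩
  refine (connected_iff _).2 ⟨fun ⟨x, hx⟩ ⟨y, hy⟩ => ?_, ⟨⟨v, .refl hv⟩⟩⟩
  obtain ⟨p, hp⟩ := (ReachableOff.symm hx).trans hy
  exact ⟨p.induce _ fun z hz => ReachableOff.trans hx (.of_mem_support hp hz)⟩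

theorem IsCompOf.eq_compOf (hD : IsCompOf G S D) (hv : v ∈ D) : D = compOf G S v := by
  obtain ⟨-, hDS, hconn, hclosed⟩ := hD
  refine Set.Subset.antisymm (fun w hw => ?_) fun w hw => ReachableOff.mem_of_closed hclosed hv hw
  exact ReachableOff.of_induce hDS (hconn.preconnected ⟨v, hv⟩ ⟨w, hw⟩)

theorem IsCompOf.not_adj (hD : IsCompOf G S D) (hD' : IsCompOf G S D') (hne : D ≠ D')
    (hu : u ∈ D) (hv : v ∈ D') : u ≠ v ∧ ¬ G.Adj u v := by
  have hdisj : ∀ x ∈ D, x ∉ D' := fun x hx hx' =>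
    hne ((hD.eq_compOf hx).trans (hD'.eq_compOf hx').symm)
  refine ⟨fun h => hdisj u hu (h ▸ hv), fun hadj => hdisj v ?_ hv⟩
  exact hD.2.2.2 u hu v hadj (Set.disjoint_left.1 hD'.2.1 hv)

theorem compOf_ne_of_not_reachableOff {a b : V} (h : ¬ ReachableOff G S a b) (hb : b ∉ S) :
    compOf G S a ≠ compOf G S b := fun he =>
  h (show b ∈ compOf G S a by rw [he]; exact .refl hb)

def Separates (G : SimpleGraph V) (S : Set V) (a b : V) : Prop :=
  a ∉ S ∧ b ∉ S ∧ ¬ ReachableOff G S a b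

theorem separates_comm {a b : V} : Separates G S a b ↔ Separates G S b a :=
  ⟨fun ⟨ha, hb, h⟩ => ⟨hb, ha, fun h' => h h'.symm⟩,
    fun ⟨hb, ha, h⟩ => ⟨ha, hb, fun h' => h h'.symm⟩⟩

theorem separates_compl_pair {a b : V} (hab : a ≠ b) (hadj : ¬ G.Adj a b) :
    Separates G {a, b}ᶜ a b := by
  refine ⟨by simp, by simp, fun h => hab (ReachableOff.mem_of_closed (D := {a}) ?_ rfl h).symm⟩
  rintro v rfl w hw hwS
  simp only [Set.mem_compl_iff, Set.mem_insert_iff, Set.mem_singleton_iff, not_not] at hwS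
  rcases hwS with rfl | rfl
  exacts [absurd hw G.irrefl, absurd hw hadj]

theorem exists_adj_compOf_of_minimal {a b s : V} (hS : Minimal (Separates G · a b) S) (hs : s ∈ S) :
    ∃ d ∈ compOf G S a, G.Adj s d := by
  -- Otherwise the component of `a` survives removing `s` from `S`, so `S \ {s}` still separates.
  by_contra! hno
  obtain ⟨ha, hb, hsep⟩ := hS.prop
  have hclosed : ∀ v ∈ compOf G S a, ∀ w, G.Adj v w → w ∉ S \ {s} → w ∈ compOf G S a := by
    intro v hv w hvw hw
    by_cases hws : w = s
    · exact absurd hvw.symm (hws ▸ hno v hv)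
    · exact hv.trans (.of_adj hvw hv.notMem_right fun hwS => hw ⟨hwS, hws⟩)
  have hsep' : Separates G (S \ {s}) a b := ⟨fun h => ha h.1, fun h => hb h.1,
    fun h => hsep (show b ∈ compOf G S a from .mem_of_closed hclosed (.refl ha) h)⟩
  exact (hS.2 hsep' Set.sdiff_subset hs).2 rfl

theorem exists_isMinSep_separates [Finite V] {a b : V} (hab : a ≠ b) (hadj : ¬ G.Adj a b) :
    ∃ S, IsMinSep G S ∧ Separates G S a b := by
  obtain ⟨S, -, hS⟩ :=
    exists_minimal_le_of_wellFoundedLT (Separates G · a b) _ (separates_compl_pair hab hadj)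
  have hS' : Minimal (Separates G · b a) S := by simpa only [separates_comm] using hS
  obtain ⟨ha, hb, hsep⟩ := hS.prop
  exact ⟨S, ⟨compOf G S a, compOf G S b, isCompOf_compOf ha, isCompOf_compOf hb,
    compOf_ne_of_not_reachableOff hsep hb, fun _ hs => exists_adj_compOf_of_minimal hS hs,
    fun _ hs => exists_adj_compOf_of_minimal hS' hs⟩, hS.prop⟩

theorem exists_isMinSep_crosses [Finite V] {T : Set V} {x y : V} (hx : x ∈ T) (hy : y ∈ T)
    (hxy : x ≠ y) (hnadj : ¬ G.Adj x y) : ∃ S, IsMinSep G S ∧ Crosses G S T := by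
  obtain ⟨S, hS, hxS, hyS, hsep⟩ := exists_isMinSep_separates hxy hnadj
  exact ⟨S, hS, compOf G S x, compOf G S y, isCompOf_compOf hxS, isCompOf_compOf hyS,
    compOf_ne_of_not_reachableOff hsep hyS, ⟨x, hx, .refl hxS⟩, ⟨y, hy, .refl hyS⟩⟩

theorem exists_isChordless_path_through {x y : V} (hD : (G.induce D).Preconnected)
    (hx : ∃ d ∈ D, G.Adj x d) (hy : ∃ d ∈ D, G.Adj y d) (hxy : x ≠ y) (hnadj : ¬ G.Adj x y) :
    ∃ p : G.Walk x y, p.IsPath ∧ p.IsChordless ∧ 2 ≤ p.length ∧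
      ∀ z ∈ p.support, z = x ∨ z = y ∨ z ∈ D := by
  obtain ⟨d₁, hd₁, hxd₁⟩ := hx
  obtain ⟨d₂, hd₂, hyd₂⟩ := hy
  set s : Set V := insert x (insert y D)
  have hDs : D ⊆ s := fun z hz => .inr (.inr hz)
  have hreach : (G.induce s).Reachable ⟨x, .inl rfl⟩ ⟨y, .inr (.inl rfl)⟩ :=
    ((induce_adj.2 hxd₁ : (G.induce s).Adj ⟨x, .inl rfl⟩ ⟨d₁, hDs hd₁⟩).reachable.trans
      ((hD ⟨d₁, hd₁⟩ ⟨d₂, hd₂⟩).map (G.induceHomOfLE hDs).toHom)).trans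
      (induce_adj.2 hyd₂.symm : (G.induce s).Adj ⟨d₂, hDs hd₂⟩ ⟨y, .inr (.inl rfl)⟩).reachable
  obtain ⟨q, hq, hlen⟩ := hreach.exists_path_of_dist
  let f : G.induce s ↪g G := Embedding.induce s
  refine ⟨q.map f.toHom, hq.map f.injective, (q.isChordless_of_length_eq_dist hlen).map f, ?_,
    fun z hz => ?_⟩
  · refine (q.length_map _).ge.trans' (hlen ▸ ?_)
    exact hreach.one_lt_dist_of_ne_of_not_adj (fun h => hxy (congrArg Subtype.val h))
      (by simpa using hnadj)
  · obtain ⟨z, -, rfl⟩ := List.mem_map.1 (Walk.support_map f.toHom q ▸ hz)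
    exact z.2

theorem exists_embedding_cycleGraph_of_separated_paths {D₁ D₂ : Set V} {x y : V}
    {p₁ p₂ : G.Walk x y} (hp₁ : p₁.IsPath) (hp₂ : p₂.IsPath) (hc₁ : p₁.IsChordless)
    (hc₂ : p₂.IsChordless) (hl₁ : 2 ≤ p₁.length) (hl₂ : 2 ≤ p₂.length)
    (hs₁ : ∀ z ∈ p₁.support, z = x ∨ z = y ∨ z ∈ D₁)
    (hs₂ : ∀ z ∈ p₂.support, z = x ∨ z = y ∨ z ∈ D₂)
    (hsep : ∀ u ∈ D₁, ∀ v ∈ D₂, u ≠ v ∧ ¬ G.Adj u v) (hx : x ∉ D₁) (hy : y ∉ D₂) :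
    ∃ n, 4 ≤ n ∧ Nonempty (cycleGraph n ↪g G) := by
  have hdisj : p₁.support.tail.Disjoint p₂.reverse.support.tail := by
    have htail : ∀ {a b} {p : G.Walk a b}, p.IsPath → ∀ z ∈ p.support.tail,
        z ∈ p.support ∧ z ≠ a := by
      intro a b p hp z hz
      have hnd := hp.support_nodup
      rw [← p.cons_tail_support, List.nodup_cons] at hnd
      exact ⟨List.mem_of_mem_tail hz, fun h => hnd.1 (h ▸ hz)⟩
    intro z hz₁ hz₂
    obtain ⟨hz₁, hzx⟩ := htail hp₁ z hz₁
    obtain ⟨hz₂, hzy⟩ := htail hp₂.reverse z hz₂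
    rw [Walk.support_reverse, List.mem_reverse] at hz₂
    have h₁ : z = y ∨ z ∈ D₁ := (hs₁ z hz₁).resolve_left hzx
    have h₂ : z = x ∨ z ∈ D₂ := (or_left_comm.1 (hs₂ z hz₂)).resolve_left hzy
    rcases h₁ with h₁ | h₁ <;> rcases h₂ with h₂ | h₂
    · exact hzx h₂
    · exact hy (h₁ ▸ h₂)
    · exact hx (h₂ ▸ h₁)
    · exact (hsep z h₁ z h₂).1 rfl
  have hcyc := hp₁.isCycle_append hp₂.reverse hdisj (.inl hl₁)
  have hchord : (p₁.append p₂.reverse).IsChordless := by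
    refine hc₁.append hc₂.reverse fun a ha b hb hab => ?_
    rw [Walk.support_reverse, List.mem_reverse] at hb ⊢
    rcases hs₁ a ha with rfl | rfl | ha' <;> try exact .inl (by simp)
    rcases hs₂ b hb with rfl | rfl | hb' <;> try exact .inr (by simp)
    exact absurd hab (hsep a ha' b hb').2
  refine ⟨_, ?_, hcyc.nonempty_embedding_cycleGraph hchord⟩
  simp only [Walk.length_append, Walk.length_reverse]
  omega

theorem IsMinSep.isClique_of_isChordal (hG : IsChordal G) (hS : IsMinSep G S) : G.IsClique S := by
  intro x hx y hy hxy
  by_contra hnadj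
  obtain ⟨D₁, D₂, hD₁, hD₂, hne, hF₁, hF₂⟩ := hS
  obtain ⟨p₁, hp₁, hc₁, hl₁, hs₁⟩ := exists_isChordless_path_through hD₁.2.2.1.preconnected
    (hF₁ x hx) (hF₁ y hy) hxy hnadj
  obtain ⟨p₂, hp₂, hc₂, hl₂, hs₂⟩ := exists_isChordless_path_through hD₂.2.2.1.preconnected
    (hF₂ x hx) (hF₂ y hy) hxy hnadj
  obtain ⟨n, hn, ⟨e⟩⟩ := exists_embedding_cycleGraph_of_separated_paths hp₁ hp₂ hc₁ hc₂ hl₁ hl₂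
    hs₁ hs₂ (fun u hu v hv => hD₁.not_adj hD₂ hne hu hv)
    (Set.disjoint_right.1 hD₁.2.1 hx) (Set.disjoint_right.1 hD₂.2.1 hy)
  exact (hG n hn).false e

theorem adj_iff_of_cycleGraph_embedding {n : ℕ} (hn : 2 ≤ n) (e : cycleGraph n ↪g G) (k l : ℕ)
    (hk : k < n) (hl : l < n) : G.Adj (e ⟨k, hk⟩) (e ⟨l, hl⟩) ↔ k = l + 1 ∨ l = k + 1 ∨
      (k = 0 ∧ l + 1 = n) ∨ (l = 0 ∧ k + 1 = n) :=
  e.map_adj_iff.trans (cycleGraph_adj_iff_val hn)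

theorem not_isClique_of_separates {n : ℕ} (hn : 4 ≤ n) (e : cycleGraph n ↪g G)
    (hS : Separates G S (e ⟨0, by omega⟩) (e ⟨2, by omega⟩)) : ¬ G.IsClique S := by
  obtain ⟨h0, h2, hsep⟩ := hS
  have hadj := adj_iff_of_cycleGraph_embedding (by omega) e
  have h1 : e ⟨1, by omega⟩ ∈ S := by
    by_contra h1
    exact hsep ((ReachableOff.of_adj ((hadj _ _ _ _).2 (by omega)) h0 h1).trans
      (.of_adj ((hadj _ _ _ _).2 (by omega)) h1 h2))
  obtain ⟨j, hj3, hjn, hjS⟩ : ∃ j, 3 ≤ j ∧ ∃ hj : j < n, e ⟨j, hj⟩ ∈ S := by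
    by_contra! hout
    have hoff : ∀ k (hk : k < n), 2 ≤ k → e ⟨k, hk⟩ ∉ S := fun k hk hk2 => by
      rcases (by omega : k = 2 ∨ 3 ≤ k) with rfl | hk3
      exacts [h2, hout k hk3 hk]
    have hreach : ∀ d k (hk : k + d + 1 = n), 2 ≤ k →
        ReachableOff G S (e ⟨k, by omega⟩) (e ⟨0, by omega⟩) := by
      intro d
      induction d with
      | zero =>
        intro k hk hk2
        exact .of_adj ((hadj _ _ _ _).2 (by omega)) (hoff k _ hk2) h0
      | succ d ih =>
        intro k hk hk2
        exact (ReachableOff.of_adj ((hadj k (k + 1) _ (by omega)).2 (by omega))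
          (hoff k _ hk2) (hoff (k + 1) _ (by omega))).trans (ih (k + 1) (by omega) (by omega))
    exact hsep (hreach (n - 3) 2 (by omega) le_rfl).symm
  intro hS
  have := hS h1 hjS (e.injective.ne (by simp [Fin.ext_iff]; omega))
  rw [hadj] at this
  omega

theorem isChordal_of_forall_isMinSep_isClique [Finite V]
    (h : ∀ S, IsMinSep G S → G.IsClique S) : IsChordal G := by
  intro n hn
  refine ⟨fun e => ?_⟩
  have hadj := adj_iff_of_cycleGraph_embedding (by omega) e
  obtain ⟨S, hS, hsep⟩ := exists_isMinSep_separates (a := e ⟨0, by omega⟩) (b := e ⟨2, by omega⟩)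
    (e.injective.ne (by simp)) (by rw [hadj]; omega)
  exact not_isClique_of_separates hn e hsep (h S hS)

theorem not_crosses_of_isClique {T : Set V} (hT : G.IsClique T) : ¬ Crosses G S T := by
  rintro ⟨D, D', hD, hD', hne, ⟨x, hxT, hx⟩, ⟨y, hyT, hy⟩⟩
  obtain ⟨hxy, hnadj⟩ := hD.not_adj hD' hne hx hy
  exact hnadj (hT hxT hyT hxy)

/-- A finite graph is chordal iff every two of its minimal separators are noncrossing. -/
theorem statement_3 [Fintype V] (G : SimpleGraph V) :
    IsChordal G ↔ ∀ S₁ S₂ : Set V, IsMinSep G S₁ → IsMinSep G S₂ → ¬ Crosses G S₁ S₂ := by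
  refine ⟨fun hG _ _ _ hS₂ => not_crosses_of_isClique (hS₂.isClique_of_isChordal hG),
    fun h => isChordal_of_forall_isMinSep_isClique fun S hS x hx y hy hxy => ?_⟩
  by_contra hnadj
  obtain ⟨S₁, hS₁, hcross⟩ := exists_isMinSep_crosses hx hy hxy hnadj
  exact h S₁ S hS₁ hS hcross
end

section
/- Let G be a P₆-free graph and S a minimal separator in G with two components D₁, D₂ of G − S full to S. Then there exist sets A₁ ⊆ D₁ and A₂ ⊆ D₂ with |A₁| ≤ 3 and |A₂| ≤ 3 such that S ⊆ N[A₁ ∪ A₂]. -/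
open SimpleGraph

variable {V : Type*}

/-- A graph is `P₆`-free if it contains no induced path on 6 vertices. -/
def P6Free (G : SimpleGraph V) : Prop :=
  IsEmpty (pathGraph 6 ↪g G)

/-!
Fix `x ∈ D₁` and `y ∈ D₂`. A vertex `u ∈ S` adjacent to neither of them has a common neighbour
with `x` in `D₁` and one with `y` in `D₂`: otherwise a chordless path leaving `u` for three steps
into one component and for two steps into the other is an induced `P₆`. Choose such a `u` whose
set of common neighbours with `x` in `D₁` is inclusion-minimal, with witnesses `p ∈ D₁` and
`q ∈ D₂`. Another `P₆` argument shows that a vertex of `S` seeing none of `x, p, y, q` would have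
a strictly smaller such set, so `A₁ = {x, p}` and `A₂ = {y, q}` cover `S`.
-/

section

variable {G : SimpleGraph V}

lemma P6Free.false_of_adj_iff (hP6 : P6Free G) (f : Fin 6 → V)
    (hf : ∀ i j, G.Adj (f i) (f j) ↔ (pathGraph 6).Adj i j) : False := by
  have twin_free : ∀ i j : Fin 6, i ≠ j →
      ∃ k, ¬((pathGraph 6).Adj i k ↔ (pathGraph 6).Adj j k) := by
    simp only [pathGraph_adj]; decide
  refine hP6.false ⟨⟨f, fun i j hij => ?_⟩, hf _ _⟩
  by_contra hne
  obtain ⟨k, hk⟩ := twin_free i j hne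
  exact hk (by rw [← hf, ← hf, hij])

lemma P6Free.false_of_path (hP6 : P6Free G) {a b c d e f : V}
    (hab : G.Adj a b) (hbc : G.Adj b c) (hcd : G.Adj c d) (hde : G.Adj d e) (hef : G.Adj e f)
    (hac : ¬G.Adj a c) (had : ¬G.Adj a d) (hae : ¬G.Adj a e) (haf : ¬G.Adj a f)
    (hbd : ¬G.Adj b d) (hbe : ¬G.Adj b e) (hbf : ¬G.Adj b f)
    (hce : ¬G.Adj c e) (hcf : ¬G.Adj c f) (hdf : ¬G.Adj d f) : False := by
  refine hP6.false_of_adj_iff ![a, b, c, d, e, f] fun i j => ?_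
  fin_cases i <;> fin_cases j <;>
    simp [pathGraph_adj, G.adj_comm, hab, hbc, hcd, hde, hef, hac, had, hae, haf, hbd, hbe,
      hbf, hce, hcf, hdf]

lemma exists_adj_boundary_of_connected_induce {D X : Set V} (hD : (G.induce D).Connected)
    {a b : V} (ha : a ∈ D) (hb : b ∈ D) (haX : a ∈ X) (hbX : b ∉ X) :
    ∃ v ∈ D, ∃ w ∈ D, G.Adj v w ∧ v ∈ X ∧ w ∉ X := by
  obtain ⟨p⟩ := hD.preconnected ⟨a, ha⟩ ⟨b, hb⟩
  obtain ⟨d, -, hdX, hdX'⟩ := p.exists_boundary_dart {x | x.1 ∈ X} haX hbX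
  exact ⟨_, d.fst.2, _, d.snd.2, d.adj, hdX, hdX'⟩

namespace IsCompOf

variable {S D₁ D₂ : Set V}

lemma subset_of_mem (hD₁ : IsCompOf G S D₁) (hD₂ : IsCompOf G S D₂) {v : V} (hv₁ : v ∈ D₁)
    (hv₂ : v ∈ D₂) : D₁ ⊆ D₂ := by
  intro w hw
  by_contra hw₂
  obtain ⟨x, -, y, hy, hxy, hx₂, hy₂⟩ :=
    exists_adj_boundary_of_connected_induce hD₁.2.2.1 hv₁ hw hv₂ hw₂
  exact hy₂ (hD₂.2.2.2 x hx₂ y hxy (Set.disjoint_left.mp hD₁.2.1 hy))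

lemma disjoint_of_ne (hD₁ : IsCompOf G S D₁) (hD₂ : IsCompOf G S D₂) (hne : D₁ ≠ D₂) :
    Disjoint D₁ D₂ :=
  Set.disjoint_left.mpr fun _ hv₁ hv₂ =>
    hne ((hD₁.subset_of_mem hD₂ hv₁ hv₂).antisymm (hD₂.subset_of_mem hD₁ hv₂ hv₁))

lemma not_adj_of_ne (hD₁ : IsCompOf G S D₁) (hD₂ : IsCompOf G S D₂) (hne : D₁ ≠ D₂)
    ⦃x : V⦄ (hx : x ∈ D₁) ⦃y : V⦄ (hy : y ∈ D₂) : ¬G.Adj x y := fun hxy =>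
  Set.disjoint_left.mp (hD₁.disjoint_of_ne hD₂ hne)
    (hD₁.2.2.2 x hx y hxy (Set.disjoint_left.mp hD₂.2.1 hy)) hy

end IsCompOf

section LocalPaths

variable {D : Set V} {u : V}

lemma exists_adj_adj_not_adj (hD : (G.induce D).Connected) {b y : V} (hb : b ∈ D)
    (hub : G.Adj u b) (hy : y ∈ D) (huy : ¬G.Adj u y) :
    ∃ b₁ ∈ D, ∃ b₂ ∈ D, G.Adj u b₁ ∧ G.Adj b₁ b₂ ∧ ¬G.Adj u b₂ := by
  obtain ⟨b₁, hb₁, b₂, hb₂, h₁₂, hub₁, hub₂⟩ :=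
    exists_adj_boundary_of_connected_induce (X := {w | G.Adj u w}) hD hb hy hub huy
  exact ⟨b₁, hb₁, b₂, hb₂, hub₁, h₁₂, hub₂⟩

lemma exists_induced_path_four (hD : (G.induce D).Connected) {a x : V} (ha : a ∈ D)
    (hua : G.Adj u a) (hx : x ∈ D) (hux : ¬G.Adj u x)
    (hcommon : ¬∃ p ∈ D, G.Adj x p ∧ G.Adj u p) :
    ∃ a₁ ∈ D, ∃ a₂ ∈ D, ∃ a₃ ∈ D, G.Adj u a₁ ∧ G.Adj a₁ a₂ ∧ G.Adj a₂ a₃ ∧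
      ¬G.Adj u a₂ ∧ ¬G.Adj u a₃ ∧ ¬G.Adj a₁ a₃ := by
  -- The edge `a₂a₃` is where a path from `a` to `x` in `D` leaves the second neighbourhood of `u`.
  obtain ⟨a₂, ha₂, a₃, ha₃, h₂₃, hX₂, hX₃⟩ :=
    exists_adj_boundary_of_connected_induce
      (X := {w | G.Adj u w ∨ ∃ a ∈ D, G.Adj u a ∧ G.Adj a w}) hD ha hx (Or.inl hua)
      (by rintro (h | ⟨p, hp, hup, hpx⟩); exacts [hux h, hcommon ⟨p, hp, hpx.symm, hup⟩])
  simp only [Set.mem_ofPred_eq, not_or, not_exists, not_and] at hX₂ hX₃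
  have hua₂ : ¬G.Adj u a₂ := fun h => hX₃.2 a₂ ha₂ h h₂₃
  obtain ⟨a₁, ha₁, hua₁, h₁₂⟩ := hX₂.resolve_left hua₂
  exact ⟨a₁, ha₁, a₂, ha₂, a₃, ha₃, hua₁, h₁₂, h₂₃, hua₂, hX₃.1, hX₃.2 a₁ ha₁ hua₁⟩

end LocalPaths

section Covering

variable {D₁ D₂ : Set V}

lemma P6Free.exists_common_adj (hP6 : P6Free G)
    (hcross : ∀ ⦃a⦄, a ∈ D₁ → ∀ ⦃b⦄, b ∈ D₂ → ¬G.Adj a b)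
    (hc₁ : (G.induce D₁).Connected) (hc₂ : (G.induce D₂).Connected)
    {x y u d₁ d₂ : V} (hx : x ∈ D₁) (hy : y ∈ D₂) (hux : ¬G.Adj u x) (huy : ¬G.Adj u y)
    (hd₁ : d₁ ∈ D₁) (hud₁ : G.Adj u d₁) (hd₂ : d₂ ∈ D₂) (hud₂ : G.Adj u d₂) :
    ∃ p ∈ D₁, G.Adj x p ∧ G.Adj u p := by
  by_contra hcommon
  obtain ⟨a₁, ha₁, a₂, ha₂, a₃, ha₃, hua₁, h₁₂, h₂₃, hua₂, hua₃, h₁₃⟩ :=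
    exists_induced_path_four hc₁ hd₁ hud₁ hx hux hcommon
  obtain ⟨b₁, hb₁, b₂, hb₂, hub₁, hb₁₂, hub₂⟩ :=
    exists_adj_adj_not_adj hc₂ hd₂ hud₂ hy huy
  exact hP6.false_of_path h₂₃.symm h₁₂.symm hua₁.symm hub₁ hb₁₂
    (fun h => h₁₃ h.symm) (fun h => hua₃ h.symm) (hcross ha₃ hb₁) (hcross ha₃ hb₂)
    (fun h => hua₂ h.symm) (hcross ha₂ hb₁) (hcross ha₂ hb₂)
    (hcross ha₁ hb₁) (hcross ha₁ hb₂) hub₂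

lemma P6Free.adj_of_common_adj (hP6 : P6Free G)
    (hcross : ∀ ⦃a⦄, a ∈ D₁ → ∀ ⦃b⦄, b ∈ D₂ → ¬G.Adj a b)
    {x y u v p q p' q' : V} (hx : x ∈ D₁) (hy : y ∈ D₂) (hp : p ∈ D₁) (hq : q ∈ D₂)
    (hp' : p' ∈ D₁) (hq' : q' ∈ D₂)
    (hux : ¬G.Adj u x) (huy : ¬G.Adj u y) (hvx : ¬G.Adj v x) (hvy : ¬G.Adj v y)
    (hxp : G.Adj x p) (hup : G.Adj u p) (hvp : ¬G.Adj v p)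
    (hyq : G.Adj y q) (huq : G.Adj u q) (hvq : ¬G.Adj v q)
    (hxp' : G.Adj x p') (hvp' : G.Adj v p') (hyq' : G.Adj y q') (hvq' : G.Adj v q') :
    G.Adj u p' := by
  by_contra hup'
  by_cases huv : G.Adj u v
  · exact hP6.false_of_path hyq huq.symm huv hvp' hxp'.symm
      (fun h => huy h.symm) (fun h => hvy h.symm) (fun h => hcross hp' hy h.symm)
      (fun h => hcross hx hy h.symm) (fun h => hvq h.symm) (fun h => hcross hp' hq h.symm)
      (fun h => hcross hx hq h.symm) hup' hux hvx
  have hpp' : G.Adj p p' := by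
    by_contra hpp'
    exact hP6.false_of_path hxp.symm hxp' hvp'.symm hvq' hyq'.symm
      hpp' (fun h => hvp h.symm) (hcross hp hq') (hcross hp hy)
      (fun h => hvx h.symm) (hcross hx hq') (hcross hx hy)
      (hcross hp' hq') (hcross hp' hy) hvy
  exact hP6.false_of_path hvp' hpp'.symm hup.symm huq hyq.symm
    hvp (fun h => huv h.symm) hvq hvy (fun h => hup' h.symm) (hcross hp' hq) (hcross hp' hy)
    (hcross hp hq) (hcross hp hy) huy

lemma P6Free.exists_dominating_pair [Finite V] (hP6 : P6Free G) {S : Set V}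
    (hD₁ : IsCompOf G S D₁) (hD₂ : IsCompOf G S D₂) (hne : D₁ ≠ D₂)
    (hf₁ : FullTo G S D₁) (hf₂ : FullTo G S D₂) {x y : V} (hx : x ∈ D₁) (hy : y ∈ D₂) :
    ∃ p ∈ D₁, ∃ q ∈ D₂, ∀ s ∈ S, G.Adj s x ∨ G.Adj s p ∨ G.Adj s y ∨ G.Adj s q := by
  have hcross := hD₁.not_adj_of_ne hD₂ hne
  set U := {s | s ∈ S ∧ ¬G.Adj s x ∧ ¬G.Adj s y}
  have hwit : ∀ u ∈ U, (∃ p ∈ D₁, G.Adj x p ∧ G.Adj u p) ∧ ∃ q ∈ D₂, G.Adj y q ∧ G.Adj u q := by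
    rintro u ⟨hu, hux, huy⟩
    obtain ⟨d₁, hd₁, hud₁⟩ := hf₁ u hu
    obtain ⟨d₂, hd₂, hud₂⟩ := hf₂ u hu
    exact ⟨hP6.exists_common_adj hcross hD₁.2.2.1 hD₂.2.2.1 hx hy hux huy hd₁ hud₁ hd₂ hud₂,
      hP6.exists_common_adj (fun _ hb _ ha h => hcross ha hb h.symm) hD₂.2.2.1 hD₁.2.2.1
        hy hx huy hux hd₂ hud₂ hd₁ hud₁⟩
  rcases U.eq_empty_or_nonempty with hU | hU
  · refine ⟨x, hx, y, hy, fun s hs => ?_⟩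
    by_contra! h
    exact hU.subset ⟨hs, h.1, h.2.2.1⟩
  obtain ⟨u, hu, hmin⟩ := U.toFinite.exists_minimalFor
    (fun u => {p | p ∈ D₁ ∧ G.Adj x p ∧ G.Adj u p}) U hU
  obtain ⟨⟨p, hp, hxp, hup⟩, q, hq, hyq, huq⟩ := hwit u hu
  refine ⟨p, hp, q, hq, fun s hs => ?_⟩
  by_contra! h
  have hsU : s ∈ U := ⟨hs, h.1, h.2.2.1⟩
  obtain ⟨-, q', hq', hyq', hsq'⟩ := hwit s hsU
  have hsub : {p | p ∈ D₁ ∧ G.Adj x p ∧ G.Adj s p} ⊆ {p | p ∈ D₁ ∧ G.Adj x p ∧ G.Adj u p} :=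
    fun p' ⟨hp', hxp', hsp'⟩ => ⟨hp', hxp', hP6.adj_of_common_adj hcross hx hy hp hq hp' hq'
      hu.2.1 hu.2.2 hsU.2.1 hsU.2.2 hxp hup h.2.1 hyq huq h.2.2.2 hxp' hsp' hyq' hsq'⟩
  exact h.2.1 (hmin hsU hsub ⟨hp, hxp, hup⟩).2.2

end Covering

end

/-- Separator Covering Lemma (simplified): in a `P₆`-free graph, a minimal separator `S`
with full components `D₁, D₂` is covered by `N[A₁ ∪ A₂]` for some `Aᵢ ⊆ Dᵢ` of size at
most 3. -/
theorem statement_8 [Fintype V] (G : SimpleGraph V) (hP6 : P6Free G)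
    (S D₁ D₂ : Set V) (hD₁ : IsCompOf G S D₁) (hD₂ : IsCompOf G S D₂) (hne : D₁ ≠ D₂)
    (hf₁ : FullTo G S D₁) (hf₂ : FullTo G S D₂) :
    ∃ A₁ A₂ : Set V, A₁ ⊆ D₁ ∧ A₂ ⊆ D₂ ∧ A₁.ncard ≤ 3 ∧ A₂.ncard ≤ 3 ∧
      S ⊆ closedNbhd G (A₁ ∪ A₂) := by
  obtain ⟨x, hx⟩ := hD₁.1
  obtain ⟨y, hy⟩ := hD₂.1
  obtain ⟨p, hp, q, hq, hdom⟩ := hP6.exists_dominating_pair hD₁ hD₂ hne hf₁ hf₂ hx hy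
  have hpair_le : ∀ a b : V, ({a, b} : Set V).ncard ≤ 3 := fun a b =>
    (Set.ncard_insert_le a {b}).trans (by rw [Set.ncard_singleton]; omega)
  refine ⟨{x, p}, {y, q}, Set.pair_subset hx hp, Set.pair_subset hy hq, hpair_le x p,
    hpair_le y q, fun s hs => Or.inr ⟨?_, ?_⟩⟩
  · rintro ((rfl | rfl) | (rfl | rfl))
    exacts [hD₁.2.1.notMem_of_mem_left hx hs, hD₁.2.1.notMem_of_mem_left hp hs,
      hD₂.2.1.notMem_of_mem_left hy hs, hD₂.2.1.notMem_of_mem_left hq hs]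
  · rcases hdom s hs with h | h | h | h
    exacts [⟨x, by simp, h⟩, ⟨p, by simp, h⟩, ⟨y, by simp, h⟩, ⟨q, by simp, h⟩]
end

section
/- Let G be a P₆-free graph, Ω a potential maximal clique in G, and D₁, D₂ two distinct components of G − Ω. For all v₁ ∈ N(D₁) \ N(D₂) and v₂ ∈ N(D₂) \ N(D₁) with v₁v₂ not an edge of G, the vertex v₁ is complete to D₁ and v₂ is complete to D₂. -/
open SimpleGraph

variable {V : Type*}

/-- `Ω` is a potential maximal clique of `G`. -/
def IsPMC (G : SimpleGraph V) (Ω : Set V) : Prop :=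
  (∀ D : Set V, IsCompOf G Ω D → nbhd G D ≠ Ω) ∧
  (∀ u ∈ Ω, ∀ v ∈ Ω, u ≠ v → ¬ G.Adj u v →
    ∃ D : Set V, IsCompOf G Ω D ∧ u ∈ nbhd G D ∧ v ∈ nbhd G D)

/-! If `v₁` missed a vertex of `D₁`, a shortest path from `v₁` to it inside `D₁ ∪ {v₁}` would
start with an induced path `v₁ d' d`. As `v₁ v₂` is a non-edge of the potential maximal clique `Ω`,
some component `D` sees both `v₁` and `v₂`, and a shortest path from `v₁` to a neighbour of `v₂`
in `D₂` inside `{v₁} ∪ D ∪ {v₂} ∪ D₂` has length at least `3`, because `v₁` sees neither `v₂` nor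
`D₂`; it starts with an induced path `v₁ x y z`. Since `D₁` is anticomplete to
`D ∪ {v₂} ∪ D₂`, the two paths glue at `v₁` to an induced `P₆`. -/

namespace SimpleGraph

variable {G : SimpleGraph V} {u v w : V}

lemma Walk.adj_getVert_iff_of_length_eq_dist {p : G.Walk u v} (hp : p.length = G.dist u v)
    {i j : ℕ} (hi : i ≤ p.length) (hj : j ≤ p.length) :
    G.Adj (p.getVert i) (p.getVert j) ↔ i + 1 = j ∨ j + 1 = i := by
  have chordless : ∀ {a b : ℕ}, a + 2 ≤ b → b ≤ p.length → ¬ G.Adj (p.getVert a) (p.getVert b) := by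
    intro a b hab hb h
    have := dist_le ((p.take a).append (cons h (p.drop b)))
    simp only [length_append, take_length, length_cons, drop_length] at this
    omega
  constructor
  · intro h
    have hne : i ≠ j := by rintro rfl; exact G.loopless.irrefl _ h
    by_contra! hfar
    rcases Nat.lt_or_gt_of_ne hne with hlt | hlt
    · exact chordless (by omega) hj h
    · exact chordless (by omega) hi h.symm
  · rintro (rfl | rfl)
    · exact p.adj_getVert_succ (by omega)
    · exact (p.adj_getVert_succ (by omega)).symm

lemma Reachable.exists_pathGraph_embedding_of_le_dist (hr : G.Reachable u v) {k : ℕ}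
    (hk : k ≤ G.dist u v) : ∃ f : pathGraph (k + 1) ↪g G, f 0 = u := by
  obtain ⟨p, hp⟩ := hr.exists_walk_length_eq_dist
  have hpath := p.isPath_of_length_eq_dist hp
  refine ⟨⟨⟨fun i => p.getVert i, fun i j hij => Fin.ext ?_⟩, fun {i j} => ?_⟩, p.getVert_zero⟩
  · exact hpath.getVert_injOn (by simp; omega) (by simp; omega) hij
  · rw [pathGraph_adj]
    exact p.adj_getVert_iff_of_length_eq_dist hp (by omega) (by omega)

lemma Reachable.three_le_dist (hr : G.Reachable u w) (hne : u ≠ w) (hnadj : ¬ G.Adj u w)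
    (hcommon : ∀ x, G.Adj u x → ¬ G.Adj x w) : 3 ≤ G.dist u w := by
  have h2 := hr.one_lt_dist_of_ne_of_not_adj hne hnadj
  by_contra! h3
  obtain ⟨p, hp⟩ := hr.exists_walk_length_eq_dist
  have hlen : p.length = 2 := by omega
  refine hcommon (p.getVert 1) ?_ ?_
  · simpa using p.adj_getVert_succ (i := 0) (by omega)
  · simpa [p.getVert_of_length_le hlen.le] using p.adj_getVert_succ (i := 1) (by omega)

lemma exists_pathGraph_embedding_join {m n : ℕ} (f : pathGraph (m + 1) ↪g G)
    (g : pathGraph (n + 1) ↪g G) (h0 : f 0 = g 0)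
    (hsep : ∀ i j, i ≠ 0 → j ≠ 0 → f i ≠ g j ∧ ¬ G.Adj (f i) (g j)) :
    Nonempty (pathGraph (m + n + 1) ↪g G) := by
  have mixed : ∀ i j, i ≠ 0 → f i ≠ g j ∧ (G.Adj (f i) (g j) ↔ (i : ℕ) = 1 ∧ (j : ℕ) = 0) := by
    intro i j hi
    by_cases hj : j = 0
    · subst hj
      rw [← h0, f.injective.ne_iff, f.map_adj_iff]
      simp [pathGraph_adj, hi, eq_comm]
    · refine ⟨(hsep i j hi hj).1, iff_of_false (hsep i j hi hj).2 ?_⟩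
      simp only [Fin.ext_iff, Fin.val_zero] at hj
      omega
  -- `φ` runs backwards along `f` to `f 0 = g 0 = φ m`, then forwards along `g`.
  let φ : Fin (m + n + 1) → V := fun k =>
    if hk : (k : ℕ) < m then f ⟨m - k, by omega⟩ else g ⟨k - m, by omega⟩
  have key : ∀ a b : Fin (m + n + 1), (φ a = φ b → a = b) ∧
      (G.Adj (φ a) (φ b) ↔ (a : ℕ) + 1 = b ∨ (b : ℕ) + 1 = a) := by
    intro a b
    simp only [φ]
    split_ifs with ha hb hb
    · simp only [f.injective.eq_iff, f.map_adj_iff, pathGraph_adj, Fin.ext_iff]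
      omega
    · have := mixed ⟨m - a, by omega⟩ ⟨b - m, by omega⟩ (by simp [Fin.ext_iff]; omega)
      simp only at this
      refine ⟨fun h => absurd h this.1, this.2.trans ?_⟩
      omega
    · have := mixed ⟨m - b, by omega⟩ ⟨a - m, by omega⟩ (by simp [Fin.ext_iff]; omega)
      simp only at this
      refine ⟨fun h => absurd h.symm this.1, G.adj_comm _ _ |>.trans <| this.2.trans ?_⟩
      omega
    · simp only [g.injective.eq_iff, g.map_adj_iff, pathGraph_adj, Fin.ext_iff]
      omega
  exact ⟨⟨⟨φ, fun a b h => (key a b).1 h⟩, fun {a b} => (key a b).2.trans pathGraph_adj.symm⟩⟩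

lemma Connected.reachable_induce_of_subset {S T : Set V} (hS : (G.induce S).Connected)
    (hST : S ⊆ T) {a b : V} (ha : a ∈ S) (hb : b ∈ S) :
    (G.induce T).Reachable ⟨a, hST ha⟩ ⟨b, hST hb⟩ :=
  (hS ⟨a, ha⟩ ⟨b, hb⟩).map (G.induceHomOfLE hST).toHom

lemma exists_pathGraph_embedding_of_le_dist_induce_insert {S : Set V} {k : ℕ} (hw : w ∈ insert u S)
    (hr : (G.induce (insert u S)).Reachable ⟨u, S.mem_insert u⟩ ⟨w, hw⟩)
    (hk : k ≤ (G.induce (insert u S)).dist ⟨u, S.mem_insert u⟩ ⟨w, hw⟩) :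
    ∃ f : pathGraph (k + 1) ↪g G, f 0 = u ∧ ∀ i, i ≠ 0 → f i ∈ S := by
  obtain ⟨f, hf0⟩ := hr.exists_pathGraph_embedding_of_le_dist hk
  refine ⟨(Embedding.induce _).comp f, congrArg Subtype.val hf0, fun i hi => ?_⟩
  exact (f i).2.resolve_left fun h =>
    hi (f.injective (Subtype.ext (h.trans (congrArg Subtype.val hf0).symm)))

end SimpleGraph

namespace IsCompOf

variable {G : SimpleGraph V} {Ω D D' : Set V} {u v w : V}

lemma notMem_of_mem (hD : IsCompOf G Ω D) (hv : v ∈ D) : v ∉ Ω :=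
  Set.disjoint_left.mp hD.2.1 hv

lemma mem_of_adj (hD : IsCompOf G Ω D) (hv : v ∈ D) (h : G.Adj v w) (hw : w ∉ Ω) : w ∈ D :=
  hD.2.2.2 v hv w h hw

lemma nbhd_subset (hD : IsCompOf G Ω D) : nbhd G D ⊆ Ω := by
  rintro v ⟨hvD, d, hd, hvd⟩
  by_contra hv
  exact hvD (hD.mem_of_adj hd hvd.symm hv)

lemma subset_of_mem_s10 (hD : IsCompOf G Ω D) (hD' : IsCompOf G Ω D') (hu : u ∈ D) (hu' : u ∈ D') :
    D ⊆ D' := by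
  intro v hv
  obtain ⟨p⟩ := hD.2.2.1 ⟨u, hu⟩ ⟨v, hv⟩
  suffices ∀ {a b : D} (q : (G.induce D).Walk a b), (a : V) ∈ D' → (b : V) ∈ D' from this p hu'
  intro a b q ha
  induction q with
  | nil => exact ha
  | @cons a c _ hac _ ih => exact ih (hD'.mem_of_adj ha hac (hD.notMem_of_mem c.2))

lemma eq_of_mem (hD : IsCompOf G Ω D) (hD' : IsCompOf G Ω D') (hu : u ∈ D) (hu' : u ∈ D') :
    D = D' :=
  (hD.subset_of_mem_s10 hD' hu hu').antisymm (hD'.subset_of_mem_s10 hD hu' hu)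

lemma ne_and_not_adj_of_ne (hD : IsCompOf G Ω D) (hD' : IsCompOf G Ω D') (hne : D ≠ D')
    (hu : u ∈ D) (hv : v ∈ D') : u ≠ v ∧ ¬ G.Adj u v :=
  ⟨by rintro rfl; exact hne (hD.eq_of_mem hD' hu hv),
   fun h => hne (hD.eq_of_mem hD' (hD.mem_of_adj hu h (hD'.notMem_of_mem hv)) hv)⟩

lemma exists_pathGraph_embedding_of_not_adj (hD : IsCompOf G Ω D) (hv : v ∈ nbhd G D)
    (hw : w ∈ D) (hvw : ¬ G.Adj v w) : ∃ f : pathGraph 3 ↪g G, f 0 = v ∧ ∀ i, i ≠ 0 → f i ∈ D := by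
  obtain ⟨hvD, u, hu, hvu⟩ := hv
  have hr : (G.induce (insert v D)).Reachable ⟨v, D.mem_insert v⟩ ⟨w, Or.inr hw⟩ :=
    (Adj.reachable (G := G.induce (insert v D)) (u := ⟨v, _⟩) (v := ⟨u, Or.inr hu⟩) hvu).trans
      (hD.2.2.1.reachable_induce_of_subset (Set.subset_insert v D) hu hw)
  refine exists_pathGraph_embedding_of_le_dist_induce_insert _ hr ?_
  exact hr.one_lt_dist_of_ne_of_not_adj (fun h => hvD (Subtype.mk.inj h ▸ hw)) hvw

lemma exists_pathGraph_embedding_through (hD : IsCompOf G Ω D) (hD' : IsCompOf G Ω D')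
    (hne : D ≠ D') (hu : u ∈ nbhd G D) (hv : v ∈ nbhd G D) (hv' : v ∈ nbhd G D')
    (hu' : u ∉ nbhd G D') (huv : ¬ G.Adj u v) :
    ∃ f : pathGraph 4 ↪g G, f 0 = u ∧ ∀ i, i ≠ 0 → f i ∈ D ∪ insert v D' := by
  have huD' : u ∉ D' := fun h => hD'.notMem_of_mem h (hD.nbhd_subset hu)
  obtain ⟨-, a, ha, hua⟩ := hu
  obtain ⟨-, b, hb, hvb⟩ := hv
  obtain ⟨-, w, hw, hvw⟩ := hv'
  set S := D ∪ insert v D'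
  have hsub : D ⊆ insert u S := fun x hx => Or.inr (Or.inl hx)
  have hvS : v ∈ insert u S := Or.inr (Or.inr (Or.inl rfl))
  have hwS : w ∈ insert u S := Or.inr (Or.inr (Or.inr hw))
  have hr : (G.induce (insert u S)).Reachable ⟨u, S.mem_insert u⟩ ⟨w, hwS⟩ :=
    (Adj.reachable (G := G.induce _) (u := ⟨u, _⟩) (v := ⟨a, hsub ha⟩) hua).trans <|
      (hD.2.2.1.reachable_induce_of_subset hsub ha hb).trans <|
      (Adj.reachable (G := G.induce _) (u := ⟨b, hsub hb⟩) (v := ⟨v, hvS⟩) hvb.symm).trans <|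
      Adj.reachable (G := G.induce _) (u := ⟨v, hvS⟩) (v := ⟨w, hwS⟩) hvw
  refine exists_pathGraph_embedding_of_le_dist_induce_insert hwS hr (hr.three_le_dist ?_ ?_ ?_)
  · exact fun h => huD' (Subtype.mk.inj h ▸ hw)
  · exact fun h => hu' ⟨huD', w, hw, h⟩
  · rintro ⟨x, rfl | hxD | rfl | hxD'⟩ hux hxw
    · exact G.loopless.irrefl _ hux
    · exact (hD.ne_and_not_adj_of_ne hD' hne hxD hw).2 hxw
    · exact huv hux
    · exact hu' ⟨huD', x, hxD', hux⟩

end IsCompOf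

lemma P6Free.forall_adj_of_mem_nbhd_sdiff {G : SimpleGraph V} {Ω D₁ D₂ : Set V} {v₁ v₂ : V}
    (hP6 : P6Free G) (hΩ : IsPMC G Ω) (hD₁ : IsCompOf G Ω D₁) (hD₂ : IsCompOf G Ω D₂)
    (hne : D₁ ≠ D₂) (hv₁ : v₁ ∈ nbhd G D₁ \ nbhd G D₂) (hv₂ : v₂ ∈ nbhd G D₂ \ nbhd G D₁)
    (hna : ¬ G.Adj v₁ v₂) : ∀ d ∈ D₁, G.Adj v₁ d := by
  intro d hd
  by_contra hv₁d
  have hv₂Ω := hD₂.nbhd_subset hv₂.1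
  have hv₁₂ : v₁ ≠ v₂ := by rintro rfl; exact hv₁.2 hv₂.1
  obtain ⟨D, hD, hv₁D, hv₂D⟩ := hΩ.2 v₁ (hD₁.nbhd_subset hv₁.1) v₂ hv₂Ω hv₁₂ hna
  have hDD₂ : D ≠ D₂ := by rintro rfl; exact hv₁.2 hv₁D
  have hDD₁ : D ≠ D₁ := by rintro rfl; exact hv₂.2 hv₂D
  obtain ⟨f, hf0, hf⟩ := hD₁.exists_pathGraph_embedding_of_not_adj hv₁.1 hd hv₁d
  obtain ⟨g, hg0, hg⟩ := hD.exists_pathGraph_embedding_through hD₂ hDD₂ hv₁D hv₂D hv₂.1 hv₁.2 hna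
  have hsep : ∀ a ∈ D₁, ∀ b ∈ D ∪ insert v₂ D₂, a ≠ b ∧ ¬ G.Adj a b := by
    rintro a ha b (hb | rfl | hb)
    · exact hD₁.ne_and_not_adj_of_ne hD hDD₁.symm ha hb
    · exact ⟨fun h => hD₁.notMem_of_mem ha (h ▸ hv₂Ω),
        fun h => hv₂.2 ⟨fun h' => hD₁.notMem_of_mem h' hv₂Ω, a, ha, h.symm⟩⟩
    · exact hD₁.ne_and_not_adj_of_ne hD₂ hne ha hb
  obtain ⟨e⟩ := exists_pathGraph_embedding_join f g (hf0.trans hg0.symm)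
    fun i j hi hj => hsep _ (hf i hi) _ (hg j hj)
  exact hP6.false e

theorem statement_10_general (G : SimpleGraph V) (hP6 : P6Free G)
    (Ω D₁ D₂ : Set V) (hΩ : IsPMC G Ω)
    (hD₁ : IsCompOf G Ω D₁) (hD₂ : IsCompOf G Ω D₂) (hne : D₁ ≠ D₂)
    (v₁ v₂ : V) (hv₁ : v₁ ∈ nbhd G D₁ \ nbhd G D₂) (hv₂ : v₂ ∈ nbhd G D₂ \ nbhd G D₁)
    (hna : ¬ G.Adj v₁ v₂) :
    (∀ d ∈ D₁, G.Adj v₁ d) ∧ (∀ d ∈ D₂, G.Adj v₂ d) :=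
  ⟨hP6.forall_adj_of_mem_nbhd_sdiff hΩ hD₁ hD₂ hne hv₁ hv₂ hna,
   hP6.forall_adj_of_mem_nbhd_sdiff hΩ hD₂ hD₁ hne.symm hv₂ hv₁ fun h => hna h.symm⟩

/-- For a PMC `Ω` of a `P₆`-free graph, distinct components `D₁, D₂` of `G - Ω`,
and nonadjacent `v₁ ∈ N(D₁) \ N(D₂)`, `v₂ ∈ N(D₂) \ N(D₁)`: `v₁` is complete to `D₁`
and `v₂` is complete to `D₂`. -/
theorem statement_10 [Fintype V] (G : SimpleGraph V) (hP6 : P6Free G)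
    (Ω D₁ D₂ : Set V) (hΩ : IsPMC G Ω)
    (hD₁ : IsCompOf G Ω D₁) (hD₂ : IsCompOf G Ω D₂) (hne : D₁ ≠ D₂)
    (v₁ v₂ : V) (hv₁ : v₁ ∈ nbhd G D₁ \ nbhd G D₂) (hv₂ : v₂ ∈ nbhd G D₂ \ nbhd G D₁)
    (hna : ¬ G.Adj v₁ v₂) :
    (∀ d ∈ D₁, G.Adj v₁ d) ∧ (∀ d ∈ D₂, G.Adj v₂ d) :=
  statement_10_general G hP6 Ω D₁ D₂ hΩ hD₁ hD₂ hne v₁ v₂ hv₁ hv₂ hna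
end
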